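/- The metric space S is homogeneous: for every f0 ∈ S there is a bijective isometry F of S with F(f0) equal to the zero function (the function defined only at 0 with value 0). Consequently, for any two points of S there is a self-isometry of S taking one to the other. -/
import Mathlib


open Set Filter

noncomputable section

/-- The space `S`: continuous real functions on `[0, ρ]` with `f 0 = 0`.
The function is recorded as a map on all of `ℝ` which is constant in the
clamped variable, so that elements are determined by their values on `[0, ρ]`. -/
structure Sp where
  ρ : ℝ
  toFun : ℝ → ℝ
  ρ_nonneg : 0 ≤ ρ
  contOn : ContinuousOn toFun (Set.Icc 0 ρ)
  zero_at_zero : toFun 0 = 0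
  eq_clamp : ∀ t, toFun t = toFun (max 0 (min t ρ))

/-- The moment of segregation of two elements of `S`. -/
noncomputable def seg (f1 f2 : Sp) : ℝ :=
  sSup {t | t ≤ min f1.ρ f2.ρ ∧ ∀ t' ∈ Set.Ico (0:ℝ) t, f1.toFun t' = f2.toFun t'}

/-- The metric on `S`: `d_S(f1, f2) = (ρ1 - s) + (ρ2 - s)`. -/
noncomputable def dS (f1 f2 : Sp) : ℝ := (f1.ρ - seg f1 f2) + (f2.ρ - seg f1 f2)

/-- The zero function, defined only at `0`. -/
noncomputable def zeroS : Sp :=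
  ⟨0, fun _ => 0, le_refl 0, continuousOn_const, rfl, fun _ => rfl⟩

open Topology

-- ===================== basics =====================

theorem Sp.ext' {a b : Sp} (h1 : a.ρ = b.ρ) (h2 : a.toFun = b.toFun) : a = b := by
  cases a; cases b; simp only [] at h1 h2; subst h1; subst h2; rfl

theorem clamp_mem {a : ℝ} (ha : 0 ≤ a) (t : ℝ) : max 0 (min t a) ∈ Icc 0 a :=
  ⟨le_max_left _ _, max_le ha (min_le_right _ _)⟩

theorem clamp_of_mem {a t : ℝ} (h : t ∈ Icc 0 a) : max 0 (min t a) = t := by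
  rw [min_eq_left h.2, max_eq_right h.1]

theorem clamp_idem {a : ℝ} (ha : 0 ≤ a) (t : ℝ) :
    max 0 (min (max 0 (min t a)) a) = max 0 (min t a) := clamp_of_mem (clamp_mem ha t)

theorem clamp_cont {a : ℝ} : Continuous (fun t : ℝ => max 0 (min t a)) :=
  continuous_const.max (continuous_id.min continuous_const)

theorem Sp.cont (f : Sp) : Continuous f.toFun := by
  have h : f.toFun = f.toFun ∘ (fun t => max 0 (min t f.ρ)) := funext fun t => f.eq_clamp t
  rw [h]
  exact f.contOn.comp_continuous clamp_cont (fun t => clamp_mem f.ρ_nonneg t)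

theorem Sp.apply_clamp (f : Sp) (t : ℝ) : f.toFun (max 0 (min t f.ρ)) = f.toFun t :=
  (f.eq_clamp t).symm

-- ===================== seg basics =====================

def segSet (f1 f2 : Sp) : Set ℝ :=
  {t | t ≤ min f1.ρ f2.ρ ∧ ∀ t' ∈ Set.Ico (0:ℝ) t, f1.toFun t' = f2.toFun t'}

theorem seg_def (f1 f2 : Sp) : seg f1 f2 = sSup (segSet f1 f2) := rfl

theorem zero_mem_segSet (f1 f2 : Sp) : (0:ℝ) ∈ segSet f1 f2 :=
  ⟨le_min f1.ρ_nonneg f2.ρ_nonneg, fun t' ht' => absurd ht'.2 (not_lt.2 ht'.1)⟩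

theorem segSet_bdd (f1 f2 : Sp) : BddAbove (segSet f1 f2) :=
  ⟨min f1.ρ f2.ρ, fun _ ht => ht.1⟩

theorem seg_nonneg (f1 f2 : Sp) : 0 ≤ seg f1 f2 :=
  le_csSup (segSet_bdd f1 f2) (zero_mem_segSet f1 f2)

theorem seg_le_min (f1 f2 : Sp) : seg f1 f2 ≤ min f1.ρ f2.ρ :=
  csSup_le ⟨0, zero_mem_segSet f1 f2⟩ fun _ ht => ht.1

theorem seg_le_left (f1 f2 : Sp) : seg f1 f2 ≤ f1.ρ :=
  (seg_le_min f1 f2).trans (min_le_left _ _)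

theorem seg_le_right (f1 f2 : Sp) : seg f1 f2 ≤ f2.ρ :=
  (seg_le_min f1 f2).trans (min_le_right _ _)

theorem le_seg {f1 f2 : Sp} {c : ℝ} (h : c ∈ segSet f1 f2) : c ≤ seg f1 f2 :=
  le_csSup (segSet_bdd f1 f2) h

theorem seg_ub {f1 f2 : Sp} {c : ℝ} (h : ∀ x ∈ segSet f1 f2, x ≤ c) : seg f1 f2 ≤ c :=
  csSup_le ⟨0, zero_mem_segSet f1 f2⟩ h

theorem seg_eq_on (f1 f2 : Sp) {t : ℝ} (ht : 0 ≤ t) (ht2 : t < seg f1 f2) :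
    f1.toFun t = f2.toFun t := by
  obtain ⟨x, hx, htx⟩ := exists_lt_of_lt_csSup ⟨0, zero_mem_segSet f1 f2⟩ ht2
  exact hx.2 t ⟨ht, htx⟩

theorem seg_comm (f1 f2 : Sp) : seg f1 f2 = seg f2 f1 := by
  unfold seg
  congr 1
  ext t
  constructor
  · rintro ⟨h1, h2⟩
    exact ⟨by rwa [min_comm], fun t' ht' => (h2 t' ht').symm⟩
  · rintro ⟨h1, h2⟩
    exact ⟨by rwa [min_comm], fun t' ht' => (h2 t' ht').symm⟩

theorem seg_val (f1 f2 : Sp) : f1.toFun (seg f1 f2) = f2.toFun (seg f1 f2) := by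
  rcases eq_or_lt_of_le (seg_nonneg f1 f2) with h0 | h0
  · rw [← h0, f1.zero_at_zero, f2.zero_at_zero]
  · set s := seg f1 f2 with hs
    have hcl : s ∈ closure (Ico (0:ℝ) s) := by
      rw [closure_Ico h0.ne]
      exact ⟨h0.le, le_refl s⟩
    have hne : (𝓝[Ico (0:ℝ) s] s).NeBot := mem_closure_iff_nhdsWithin_neBot.mp hcl
    have t1 : Tendsto f1.toFun (𝓝[Ico (0:ℝ) s] s) (𝓝 (f1.toFun s)) :=
      (f1.cont.tendsto s).mono_left nhdsWithin_le_nhds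
    have t2 : Tendsto f2.toFun (𝓝[Ico (0:ℝ) s] s) (𝓝 (f2.toFun s)) :=
      (f2.cont.tendsto s).mono_left nhdsWithin_le_nhds
    have t1' : Tendsto f1.toFun (𝓝[Ico (0:ℝ) s] s) (𝓝 (f2.toFun s)) := by
      refine t2.congr' ?_
      filter_upwards [self_mem_nhdsWithin] with x hx
      exact (seg_eq_on f1 f2 hx.1 hx.2).symm
    exact tendsto_nhds_unique t1 t1'

theorem seg_eq_on' (f1 f2 : Sp) {t : ℝ} (ht : 0 ≤ t) (ht2 : t ≤ seg f1 f2) :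
    f1.toFun t = f2.toFun t := by
  rcases eq_or_lt_of_le ht2 with h | h
  · rw [h]; exact seg_val f1 f2
  · exact seg_eq_on f1 f2 ht h

theorem exists_ne_of_seg_lt (f1 f2 : Sp) {m : ℝ} (h1 : seg f1 f2 < m)
    (h2 : m ≤ min f1.ρ f2.ρ) :
    ∃ r, seg f1 f2 < r ∧ r < m ∧ f1.toFun r ≠ f2.toFun r := by
  by_contra hcon
  push_neg at hcon
  have hm : m ∈ segSet f1 f2 := by
    refine ⟨h2, fun t' ht' => ?_⟩
    rcases lt_trichotomy t' (seg f1 f2) with h | h | h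
    · exact seg_eq_on f1 f2 ht'.1 h
    · rw [h]; exact seg_val f1 f2
    · exact hcon t' h ht'.2
  exact absurd (le_seg hm) (not_le.2 h1)

theorem seg_self (f : Sp) : seg f f = f.ρ := by
  apply le_antisymm
  · exact (seg_le_min f f).trans (by rw [min_self])
  · exact le_seg ⟨by rw [min_self], fun t' _ => rfl⟩

theorem seg_zeroS_left (f : Sp) : seg zeroS f = 0 := by
  apply le_antisymm
  · have := seg_le_min zeroS f
    have hz : zeroS.ρ = 0 := rfl
    rw [hz] at this
    exact this.trans (min_le_left _ _)
  · exact seg_nonneg _ _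

theorem seg_zeroS_right (f : Sp) : seg f zeroS = 0 := by
  rw [seg_comm]; exact seg_zeroS_left f

theorem seg_min_le (a b c : Sp) : min (seg a c) (seg b c) ≤ seg a b := by
  apply le_seg
  constructor
  · exact le_min ((min_le_left _ _).trans (seg_le_left a c))
      ((min_le_right _ _).trans (seg_le_left b c))
  · intro t' ht'
    have h1 : a.toFun t' = c.toFun t' :=
      seg_eq_on a c ht'.1 (lt_of_lt_of_le ht'.2 (min_le_left _ _))
    have h2 : b.toFun t' = c.toFun t' :=
      seg_eq_on b c ht'.1 (lt_of_lt_of_le ht'.2 (min_le_right _ _))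
    rw [h1, h2]

theorem seg_eq_of_lt {a b c : Sp} (h : seg a c < seg b c) : seg a b = seg a c := by
  apply le_antisymm
  · apply seg_ub
    intro x hx
    by_contra hlt
    push_neg at hlt
    set m := min x (seg b c) with hm
    have hmgt : seg a c < m := lt_min hlt h
    have hmle : m ≤ min a.ρ c.ρ :=
      le_min ((min_le_left _ _).trans (hx.1.trans (min_le_left _ _)))
        ((min_le_right _ _).trans (seg_le_right b c))
    obtain ⟨r, hr1, hr2, hr3⟩ := exists_ne_of_seg_lt a c hmgt hmle
    have hr0 : 0 ≤ r := (seg_nonneg a c).trans hr1.le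
    have hab : a.toFun r = b.toFun r := hx.2 r ⟨hr0, hr2.trans_le (min_le_left _ _)⟩
    have hbc : b.toFun r = c.toFun r :=
      seg_eq_on b c hr0 (hr2.trans_le (min_le_right _ _))
    exact hr3 (hab.trans hbc)
  · calc seg a c = min (seg a c) (seg b c) := (min_eq_left h.le).symm
      _ ≤ seg a b := seg_min_le a b c

-- ===================== germs =====================

def Germ' (x y : ℝ → ℝ) : Prop := ∃ ε > (0:ℝ), ∀ r ∈ Icc (0:ℝ) ε, x r = y r

theorem germ_refl (x : ℝ → ℝ) : Germ' x x := ⟨1, one_pos, fun _ _ => rfl⟩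

theorem germ_symm {x y : ℝ → ℝ} (h : Germ' x y) : Germ' y x := by
  obtain ⟨ε, hε, h⟩ := h
  exact ⟨ε, hε, fun r hr => (h r hr).symm⟩

theorem germ_trans {x y z : ℝ → ℝ} (h1 : Germ' x y) (h2 : Germ' y z) : Germ' x z := by
  obtain ⟨ε1, hε1, h1⟩ := h1
  obtain ⟨ε2, hε2, h2⟩ := h2
  refine ⟨min ε1 ε2, lt_min hε1 hε2, fun r hr => ?_⟩
  rw [h1 r ⟨hr.1, hr.2.trans (min_le_left _ _)⟩, h2 r ⟨hr.1, hr.2.trans (min_le_right _ _)⟩]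

theorem germ_congr {x y x' y' : ℝ → ℝ} (hx : ∀ r, x r = x' r) (hy : ∀ r, y r = y' r)
    (h : Germ' x y) : Germ' x' y' := by
  obtain ⟨ε, hε, h⟩ := h
  exact ⟨ε, hε, fun r hr => by rw [← hx r, ← hy r]; exact h r hr⟩

theorem germ_add {x y : ℝ → ℝ} (w : ℝ → ℝ) (h : Germ' x y) :
    Germ' (fun r => x r + w r) (fun r => y r + w r) := by
  obtain ⟨ε, hε, h⟩ := h
  exact ⟨ε, hε, fun r hr => by simp only [h r hr]⟩

theorem germ_add_cancel {x y w : ℝ → ℝ}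
    (h : Germ' (fun r => x r + w r) (fun r => y r + w r)) : Germ' x y := by
  obtain ⟨ε, hε, h⟩ := h
  refine ⟨ε, hε, fun r hr => ?_⟩
  have := h r hr
  simpa using this

theorem germ_shift_ne (x : ℝ → ℝ) {c : ℝ} (hc : c ≠ 0) :
    ¬ Germ' (fun r => x r + c * r) x := by
  rintro ⟨ε, hε, h⟩
  have := h ε ⟨hε.le, le_refl ε⟩
  simp only [add_eq_left] at this
  exact hc (by
    rcases mul_eq_zero.mp this with h | h
    · exact h
    · exact absurd h hε.ne')

-- ===================== tails =====================

def tl (f : Sp) (s : ℝ) : ℝ → ℝ := fun r => f.toFun (s + r) - f.toFun s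

def dlt (f : Sp) (s : ℝ) : ℝ → ℝ := fun r => f.toFun (s - r) - f.toFun s

theorem tl_zero (f : Sp) (s : ℝ) : tl f s 0 = 0 := by simp [tl]

theorem dlt_zero (f : Sp) (s : ℝ) : dlt f s 0 = 0 := by simp [dlt]

theorem tl_cont (f : Sp) (s : ℝ) : Continuous (tl f s) :=
  (f.cont.comp (continuous_const.add continuous_id)).sub continuous_const

theorem dlt_cont (f : Sp) (s : ℝ) : Continuous (dlt f s) :=
  (f.cont.comp (continuous_const.sub continuous_id)).sub continuous_const

/-- `tl f (seg f g)` and `tl g (seg f g)` do not share a germ when the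
segregation moment is interior. -/
theorem tl_not_germ {f g : Sp} (h1 : seg f g < f.ρ) (h2 : seg f g < g.ρ) :
    ¬ Germ' (tl f (seg f g)) (tl g (seg f g)) := by
  rintro ⟨ε, hε, hagree⟩
  set s := seg f g with hs
  have hs0 : 0 ≤ s := seg_nonneg f g
  set ε' := min ε (min (f.ρ - s) (g.ρ - s)) with hε'
  have hε'0 : 0 < ε' := lt_min hε (lt_min (by linarith) (by linarith))
  have hmem : s + ε' ∈ segSet f g := by
    constructor
    · refine le_min ?_ ?_
      · have : ε' ≤ f.ρ - s := (min_le_right _ _).trans (min_le_left _ _)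
        linarith
      · have : ε' ≤ g.ρ - s := (min_le_right _ _).trans (min_le_right _ _)
        linarith
    · intro t' ht'
      rcases le_or_gt t' s with h | h
      · exact seg_eq_on' f g ht'.1 h
      · have hd : t' - s ∈ Icc (0:ℝ) ε := by
          constructor
          · linarith
          · have h2' : t' < s + ε' := ht'.2
            have : ε' ≤ ε := min_le_left _ _
            linarith
        have := hagree (t' - s) hd
        simp only [tl] at this
        have hsv : f.toFun s = g.toFun s := seg_val f g
        have : f.toFun (s + (t' - s)) = g.toFun (s + (t' - s)) := by linarith
        simpa using this
  have := le_seg hmem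
  linarith

-- ===================== psi =====================

open Classical in
/-- The germ-level correction applied to tails. -/
noncomputable def psi (f0 : Sp) (s : ℝ) (h : ℝ → ℝ) : ℝ → ℝ :=
  if f0.ρ = 0 then h
  else if s = f0.ρ then
    (if ∃ i : ℕ, Germ' h (fun r => dlt f0 s r + (i:ℝ) * r) then fun r => h r + r else h)
  else if s = 0 then
    (if ∃ i : ℕ, Germ' h (fun r => tl f0 s r + ((i:ℝ) + 1) * r) then fun r => h r - r else h)
  else if Germ' h (dlt f0 s) then fun r => h r - dlt f0 s r + tl f0 s r else h

theorem psi_zero (f0 : Sp) (s : ℝ) {h : ℝ → ℝ} (h0 : h 0 = 0) : psi f0 s h 0 = 0 := by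
  unfold psi
  split_ifs <;> simp [h0, tl_zero, dlt_zero]

theorem psi_cont (f0 : Sp) (s : ℝ) {h : ℝ → ℝ} (hh : Continuous h) :
    Continuous (psi f0 s h) := by
  unfold psi
  split_ifs
  · exact hh
  · exact hh.add continuous_id
  · exact hh
  · exact hh.sub continuous_id
  · exact hh
  · exact (hh.sub (dlt_cont f0 s)).add (tl_cont f0 s)
  · exact hh

theorem psi_sub {f0 : Sp} {s : ℝ} {h1 h2 : ℝ → ℝ} (hg : Germ' h1 h2) (r : ℝ) :
    psi f0 s h1 r - psi f0 s h2 r = h1 r - h2 r := by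
  have e1 : (∃ i : ℕ, Germ' h1 (fun r => dlt f0 s r + (i:ℝ) * r)) ↔
      (∃ i : ℕ, Germ' h2 (fun r => dlt f0 s r + (i:ℝ) * r)) :=
    ⟨fun ⟨i, hi⟩ => ⟨i, germ_trans (germ_symm hg) hi⟩,
     fun ⟨i, hi⟩ => ⟨i, germ_trans hg hi⟩⟩
  have e2 : (∃ i : ℕ, Germ' h1 (fun r => tl f0 s r + ((i:ℝ) + 1) * r)) ↔
      (∃ i : ℕ, Germ' h2 (fun r => tl f0 s r + ((i:ℝ) + 1) * r)) :=
    ⟨fun ⟨i, hi⟩ => ⟨i, germ_trans (germ_symm hg) hi⟩,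
     fun ⟨i, hi⟩ => ⟨i, germ_trans hg hi⟩⟩
  have e3 : Germ' h1 (dlt f0 s) ↔ Germ' h2 (dlt f0 s) :=
    ⟨fun hh => germ_trans (germ_symm hg) hh, fun hh => germ_trans hg hh⟩
  unfold psi
  by_cases hρ : f0.ρ = 0
  · rw [if_pos hρ, if_pos hρ]
  rw [if_neg hρ, if_neg hρ]
  by_cases hsρ : s = f0.ρ
  · rw [if_pos hsρ, if_pos hsρ]
    by_cases hc : ∃ i : ℕ, Germ' h1 (fun r => dlt f0 s r + (i:ℝ) * r)
    · rw [if_pos hc, if_pos (e1.mp hc)]; ring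
    · rw [if_neg hc, if_neg (fun hcc => hc (e1.mpr hcc))]
  rw [if_neg hsρ, if_neg hsρ]
  by_cases hs0 : s = 0
  · rw [if_pos hs0, if_pos hs0]
    by_cases hc : ∃ i : ℕ, Germ' h1 (fun r => tl f0 s r + ((i:ℝ) + 1) * r)
    · rw [if_pos hc, if_pos (e2.mp hc)]; ring
    · rw [if_neg hc, if_neg (fun hcc => hc (e2.mpr hcc))]
  rw [if_neg hs0, if_neg hs0]
  by_cases hc : Germ' h1 (dlt f0 s)
  · rw [if_pos hc, if_pos (e3.mp hc)]; ring
  · rw [if_neg hc, if_neg (fun hcc => hc (e3.mpr hcc))]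

-- psi unfolding lemmas

theorem psi_rho_zero {f0 : Sp} (hρ : f0.ρ = 0) (s : ℝ) (h : ℝ → ℝ) : psi f0 s h = h := by
  unfold psi; rw [if_pos hρ]

theorem psi_top_pos {f0 : Sp} {s : ℝ} {h : ℝ → ℝ} (hρ : f0.ρ ≠ 0) (hs : s = f0.ρ)
    (hc : ∃ i : ℕ, Germ' h (fun r => dlt f0 s r + (i:ℝ) * r)) :
    psi f0 s h = fun r => h r + r := by
  unfold psi; rw [if_neg hρ, if_pos hs, if_pos hc]

theorem psi_top_neg {f0 : Sp} {s : ℝ} {h : ℝ → ℝ} (hρ : f0.ρ ≠ 0) (hs : s = f0.ρ)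
    (hc : ¬ ∃ i : ℕ, Germ' h (fun r => dlt f0 s r + (i:ℝ) * r)) :
    psi f0 s h = h := by
  unfold psi; rw [if_neg hρ, if_pos hs, if_neg hc]

theorem psi_bot_pos {f0 : Sp} {s : ℝ} {h : ℝ → ℝ} (hρ : f0.ρ ≠ 0) (hs : s ≠ f0.ρ) (hs0 : s = 0)
    (hc : ∃ i : ℕ, Germ' h (fun r => tl f0 s r + ((i:ℝ) + 1) * r)) :
    psi f0 s h = fun r => h r - r := by
  unfold psi; rw [if_neg hρ, if_neg hs, if_pos hs0, if_pos hc]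

theorem psi_bot_neg {f0 : Sp} {s : ℝ} {h : ℝ → ℝ} (hρ : f0.ρ ≠ 0) (hs : s ≠ f0.ρ) (hs0 : s = 0)
    (hc : ¬ ∃ i : ℕ, Germ' h (fun r => tl f0 s r + ((i:ℝ) + 1) * r)) :
    psi f0 s h = h := by
  unfold psi; rw [if_neg hρ, if_neg hs, if_pos hs0, if_neg hc]

theorem psi_mid_pos {f0 : Sp} {s : ℝ} {h : ℝ → ℝ} (hρ : f0.ρ ≠ 0) (hs : s ≠ f0.ρ) (hs0 : s ≠ 0)
    (hc : Germ' h (dlt f0 s)) :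
    psi f0 s h = fun r => h r - dlt f0 s r + tl f0 s r := by
  unfold psi; rw [if_neg hρ, if_neg hs, if_neg hs0, if_pos hc]

theorem psi_mid_neg {f0 : Sp} {s : ℝ} {h : ℝ → ℝ} (hρ : f0.ρ ≠ 0) (hs : s ≠ f0.ρ) (hs0 : s ≠ 0)
    (hc : ¬ Germ' h (dlt f0 s)) :
    psi f0 s h = h := by
  unfold psi; rw [if_neg hρ, if_neg hs, if_neg hs0, if_neg hc]

-- germ injectivity of psi

theorem psi_germ_inj {f0 : Sp} {s : ℝ} {h1 h2 : ℝ → ℝ} (hs0 : 0 ≤ s) (hsρ : s ≤ f0.ρ)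
    (H1 : s < f0.ρ → ¬ Germ' h1 (tl f0 s)) (H2 : s < f0.ρ → ¬ Germ' h2 (tl f0 s))
    (hg : Germ' (psi f0 s h1) (psi f0 s h2)) : Germ' h1 h2 := by
  by_cases hρ : f0.ρ = 0
  · rwa [psi_rho_zero hρ, psi_rho_zero hρ] at hg
  by_cases hst : s = f0.ρ
  · by_cases hc1 : ∃ i : ℕ, Germ' h1 (fun r => dlt f0 s r + (i:ℝ) * r) <;>
      by_cases hc2 : ∃ i : ℕ, Germ' h2 (fun r => dlt f0 s r + (i:ℝ) * r)
    · rw [psi_top_pos hρ hst hc1, psi_top_pos hρ hst hc2] at hg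
      exact germ_add_cancel (w := fun r => r) hg
    · exfalso
      rw [psi_top_pos hρ hst hc1, psi_top_neg hρ hst hc2] at hg
      obtain ⟨i, hi⟩ := hc1
      have step : Germ' (fun r => h1 r + r) (fun r => dlt f0 s r + ((i:ℝ) + 1) * r) :=
        germ_congr (fun r => rfl) (fun r => by ring) (germ_add (fun r => r) hi)
      have : Germ' h2 (fun r => dlt f0 s r + ((i:ℝ) + 1) * r) :=
        germ_trans (germ_symm hg) step
      exact hc2 ⟨i + 1, germ_congr (fun _ => rfl) (fun r => by push_cast; ring) this⟩
    · exfalso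
      rw [psi_top_neg hρ hst hc1, psi_top_pos hρ hst hc2] at hg
      obtain ⟨i, hi⟩ := hc2
      have step : Germ' (fun r => h2 r + r) (fun r => dlt f0 s r + ((i:ℝ) + 1) * r) :=
        germ_congr (fun r => rfl) (fun r => by ring) (germ_add (fun r => r) hi)
      have : Germ' h1 (fun r => dlt f0 s r + ((i:ℝ) + 1) * r) :=
        germ_trans hg step
      exact hc1 ⟨i + 1, germ_congr (fun _ => rfl) (fun r => by push_cast; ring) this⟩
    · rwa [psi_top_neg hρ hst hc1, psi_top_neg hρ hst hc2] at hg
  by_cases hs0' : s = 0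
  · have hslt : s < f0.ρ := hsρ.lt_of_ne hst
    by_cases hc1 : ∃ i : ℕ, Germ' h1 (fun r => tl f0 s r + ((i:ℝ) + 1) * r) <;>
      by_cases hc2 : ∃ i : ℕ, Germ' h2 (fun r => tl f0 s r + ((i:ℝ) + 1) * r)
    · rw [psi_bot_pos hρ hst hs0' hc1, psi_bot_pos hρ hst hs0' hc2] at hg
      have := germ_add (fun r => r) hg
      exact germ_congr (fun r => by ring) (fun r => by ring) this
    · exfalso
      rw [psi_bot_pos hρ hst hs0' hc1, psi_bot_neg hρ hst hs0' hc2] at hg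
      obtain ⟨i, hi⟩ := hc1
      have step : Germ' (fun r => h1 r - r) (fun r => tl f0 s r + (i:ℝ) * r) :=
        germ_congr (fun r => by ring) (fun r => by ring) (germ_add (fun r => -r) hi)
      have hh2 : Germ' h2 (fun r => tl f0 s r + (i:ℝ) * r) := germ_trans (germ_symm hg) step
      rcases Nat.eq_zero_or_pos i with h0 | hpos
      · subst h0
        exact H2 hslt (germ_congr (fun _ => rfl) (fun r => by push_cast; ring) hh2)
      · obtain ⟨j, rfl⟩ := Nat.exists_eq_add_of_lt hpos |>.imp fun j hj => hj
        exact hc2 ⟨j, germ_congr (fun _ => rfl) (fun r => by push_cast; ring) hh2⟩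
    · exfalso
      rw [psi_bot_neg hρ hst hs0' hc1, psi_bot_pos hρ hst hs0' hc2] at hg
      obtain ⟨i, hi⟩ := hc2
      have step : Germ' (fun r => h2 r - r) (fun r => tl f0 s r + (i:ℝ) * r) :=
        germ_congr (fun r => by ring) (fun r => by ring) (germ_add (fun r => -r) hi)
      have hh1 : Germ' h1 (fun r => tl f0 s r + (i:ℝ) * r) := germ_trans hg step
      rcases Nat.eq_zero_or_pos i with h0 | hpos
      · subst h0
        exact H1 hslt (germ_congr (fun _ => rfl) (fun r => by push_cast; ring) hh1)
      · obtain ⟨j, rfl⟩ := Nat.exists_eq_add_of_lt hpos |>.imp fun j hj => hj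
        exact hc1 ⟨j, germ_congr (fun _ => rfl) (fun r => by push_cast; ring) hh1⟩
    · rwa [psi_bot_neg hρ hst hs0' hc1, psi_bot_neg hρ hst hs0' hc2] at hg
  · have hslt : s < f0.ρ := hsρ.lt_of_ne hst
    by_cases hc1 : Germ' h1 (dlt f0 s) <;> by_cases hc2 : Germ' h2 (dlt f0 s)
    · rw [psi_mid_pos hρ hst hs0' hc1, psi_mid_pos hρ hst hs0' hc2] at hg
      exact germ_add_cancel (w := fun r => tl f0 s r - dlt f0 s r)
        (germ_congr (fun r => by ring) (fun r => by ring) hg)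
    · exfalso
      rw [psi_mid_pos hρ hst hs0' hc1, psi_mid_neg hρ hst hs0' hc2] at hg
      have hγ : Germ' (fun r => h1 r - dlt f0 s r + tl f0 s r) (tl f0 s) :=
        germ_congr (fun r => by ring) (fun r => by ring)
          (germ_add (fun r => tl f0 s r - dlt f0 s r) hc1)
      exact H2 hslt (germ_trans (germ_symm hg) hγ)
    · exfalso
      rw [psi_mid_neg hρ hst hs0' hc1, psi_mid_pos hρ hst hs0' hc2] at hg
      have hγ : Germ' (fun r => h2 r - dlt f0 s r + tl f0 s r) (tl f0 s) :=
        germ_congr (fun r => by ring) (fun r => by ring)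
          (germ_add (fun r => tl f0 s r - dlt f0 s r) hc2)
      exact H1 hslt (germ_trans hg hγ)
    · rwa [psi_mid_neg hρ hst hs0' hc1, psi_mid_neg hρ hst hs0' hc2] at hg

-- image of psi avoids the downward germ

theorem psi_avoid {f0 : Sp} {s : ℝ} {h : ℝ → ℝ} (hs0 : 0 < s) (hsρ : s ≤ f0.ρ)
    (H : s < f0.ρ → ¬ Germ' h (tl f0 s)) : ¬ Germ' (psi f0 s h) (dlt f0 s) := by
  intro hger
  by_cases hρ : f0.ρ = 0
  · rw [hρ] at hsρ; linarith
  by_cases hst : s = f0.ρ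
  · by_cases hc : ∃ i : ℕ, Germ' h (fun r => dlt f0 s r + (i:ℝ) * r)
    · rw [psi_top_pos hρ hst hc] at hger
      obtain ⟨i, hi⟩ := hc
      have step : Germ' (fun r => h r + r) (fun r => dlt f0 s r + ((i:ℝ) + 1) * r) :=
        germ_congr (fun r => rfl) (fun r => by ring) (germ_add (fun r => r) hi)
      have : Germ' (fun r => dlt f0 s r + ((i:ℝ) + 1) * r) (dlt f0 s) :=
        germ_trans (germ_symm step) hger
      exact germ_shift_ne (dlt f0 s) (by positivity : ((i:ℝ) + 1) ≠ 0) this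
    · rw [psi_top_neg hρ hst hc] at hger
      exact hc ⟨0, germ_congr (fun _ => rfl) (fun r => by push_cast; ring) hger⟩
  by_cases hs0' : s = 0
  · exact absurd hs0' hs0.ne'
  · have hslt : s < f0.ρ := hsρ.lt_of_ne hst
    by_cases hc : Germ' h (dlt f0 s)
    · rw [psi_mid_pos hρ hst hs0' hc] at hger
      have hγ : Germ' (fun r => h r - dlt f0 s r + tl f0 s r) (tl f0 s) :=
        germ_congr (fun r => by ring) (fun r => by ring)
          (germ_add (fun r => tl f0 s r - dlt f0 s r) hc)
      have hγδ : Germ' (tl f0 s) (dlt f0 s) := germ_trans (germ_symm hγ) hger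
      exact H hslt (germ_trans hc (germ_symm hγδ))
    · rw [psi_mid_neg hρ hst hs0' hc] at hger
      exact hc hger

-- ===================== rev =====================

theorem minmax_comm {a x : ℝ} (ha : 0 ≤ a) : min a (max x 0) = max 0 (min x a) := by
  rcases le_total x 0 with h | h
  · rw [max_eq_right h, max_eq_left (le_trans (min_le_left x a) h), min_eq_right ha]
  · rcases le_total x a with h2 | h2
    · rw [max_eq_left h, min_eq_right h2, min_eq_left h2, max_eq_right h]
    · rw [max_eq_left h, min_eq_left h2, min_eq_right h2, max_eq_right ha]

noncomputable def rev (f0 : Sp) : Sp where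
  ρ := f0.ρ
  toFun := fun t => f0.toFun (f0.ρ - max 0 (min t f0.ρ)) - f0.toFun f0.ρ
  ρ_nonneg := f0.ρ_nonneg
  contOn := by
    apply Continuous.continuousOn
    exact ((f0.cont.comp (continuous_const.sub clamp_cont)).sub continuous_const)
  zero_at_zero := by
    have h : min (0:ℝ) f0.ρ = 0 := min_eq_left f0.ρ_nonneg
    simp [h]
  eq_clamp := by
    intro t
    simp only [clamp_idem f0.ρ_nonneg t]

theorem rev_rho (f0 : Sp) : (rev f0).ρ = f0.ρ := rfl

theorem rev_apply (f0 : Sp) (t : ℝ) :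
    (rev f0).toFun t = f0.toFun (f0.ρ - max 0 (min t f0.ρ)) - f0.toFun f0.ρ := rfl

theorem rev_apply_mem (f0 : Sp) {t : ℝ} (ht : t ∈ Icc 0 f0.ρ) :
    (rev f0).toFun t = f0.toFun (f0.ρ - t) - f0.toFun f0.ρ := by
  rw [rev_apply, clamp_of_mem ht]

theorem rev_rev (f0 : Sp) : rev (rev f0) = f0 := by
  refine Sp.ext' rfl ?_
  funext t
  have h1 : (rev f0).toFun (rev f0).ρ = - f0.toFun f0.ρ := by
    rw [rev_rho, rev_apply_mem f0 ⟨f0.ρ_nonneg, le_refl _⟩]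
    simp [f0.zero_at_zero]
  have hc : max 0 (min t f0.ρ) ∈ Icc 0 f0.ρ := clamp_mem f0.ρ_nonneg t
  have h2 : f0.ρ - max 0 (min t f0.ρ) ∈ Icc 0 f0.ρ := by
    constructor
    · linarith [hc.2]
    · linarith [hc.1]
  calc (rev (rev f0)).toFun t
      = (rev f0).toFun ((rev f0).ρ - max 0 (min t (rev f0).ρ)) - (rev f0).toFun (rev f0).ρ := rfl
    _ = f0.toFun t := by
        rw [h1, rev_rho, rev_apply_mem f0 h2]
        have : f0.ρ - (f0.ρ - max 0 (min t f0.ρ)) = max 0 (min t f0.ρ) := by ring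
        rw [this, f0.apply_clamp]
        ring

theorem rev_tl {f0 : Sp} {s : ℝ} (hs0 : 0 ≤ s) (hsρ : s ≤ f0.ρ) :
    tl (rev f0) (f0.ρ - s) = dlt f0 s := by
  funext r
  have hu : f0.ρ - s ∈ Icc 0 f0.ρ := ⟨by linarith, by linarith⟩
  have h1 : (rev f0).toFun (f0.ρ - s) = f0.toFun s - f0.toFun f0.ρ := by
    rw [rev_apply_mem f0 hu]
    congr 1
    ring_nf
  have h2 : (rev f0).toFun (f0.ρ - s + r) = f0.toFun (s - r) - f0.toFun f0.ρ := by
    rw [rev_apply]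
    have h3 : f0.ρ - max 0 (min (f0.ρ - s + r) f0.ρ) = max 0 (min (s - r) f0.ρ) := by
      rw [← minmax_comm f0.ρ_nonneg]
      simp only [min_def, max_def]
      split_ifs <;> linarith
    rw [h3, f0.apply_clamp]
  simp only [tl, dlt, h1, h2]
  ring

theorem rev_dlt {f0 : Sp} {s : ℝ} (hs0 : 0 ≤ s) (hsρ : s ≤ f0.ρ) :
    dlt (rev f0) (f0.ρ - s) = tl f0 s := by
  funext r
  have hu : f0.ρ - s ∈ Icc 0 f0.ρ := ⟨by linarith, by linarith⟩
  have h1 : (rev f0).toFun (f0.ρ - s) = f0.toFun s - f0.toFun f0.ρ := by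
    rw [rev_apply_mem f0 hu]
    congr 1
    ring_nf
  have h2 : (rev f0).toFun (f0.ρ - s - r) = f0.toFun (s + r) - f0.toFun f0.ρ := by
    rw [rev_apply]
    have h3 : f0.ρ - max 0 (min (f0.ρ - s - r) f0.ρ) = max 0 (min (s + r) f0.ρ) := by
      rw [← minmax_comm f0.ρ_nonneg]
      simp only [min_def, max_def]
      split_ifs <;> linarith
    rw [h3, f0.apply_clamp]
  simp only [tl, dlt, h1, h2]
  ring

theorem psi_rev_inv {f0 : Sp} {s : ℝ} {h : ℝ → ℝ} (hs0 : 0 ≤ s) (hsρ : s ≤ f0.ρ)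
    (Hdom : s < f0.ρ → ¬ Germ' h (tl f0 s)) :
    psi (rev f0) (f0.ρ - s) (psi f0 s h) = h := by
  by_cases hρ : f0.ρ = 0
  · have hrρ : (rev f0).ρ = 0 := hρ
    rw [psi_rho_zero hρ, psi_rho_zero hrρ]
  have hrρ : (rev f0).ρ ≠ 0 := hρ
  have hT : tl (rev f0) (f0.ρ - s) = dlt f0 s := rev_tl hs0 hsρ
  have hD : dlt (rev f0) (f0.ρ - s) = tl f0 s := rev_dlt hs0 hsρ
  by_cases hst : s = f0.ρ
  · -- forward shift, inverted by backward shift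
    have hu0 : f0.ρ - s = 0 := by rw [hst]; ring
    have huρ : f0.ρ - s ≠ (rev f0).ρ := by rw [hu0, rev_rho]; exact fun hh => hρ hh.symm
    by_cases hc : ∃ i : ℕ, Germ' h (fun r => dlt f0 s r + (i:ℝ) * r)
    · rw [psi_top_pos hρ hst hc]
      obtain ⟨i, hi⟩ := hc
      have hcond : ∃ j : ℕ, Germ' (fun r => h r + r)
          (fun r => tl (rev f0) (f0.ρ - s) r + ((j:ℝ) + 1) * r) := by
        refine ⟨i, ?_⟩
        rw [hT]
        exact germ_congr (fun r => rfl) (fun r => by ring) (germ_add (fun r => r) hi)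
      rw [psi_bot_pos hrρ huρ hu0 hcond]
      funext r; ring
    · rw [psi_top_neg hρ hst hc]
      have hcond : ¬ ∃ j : ℕ, Germ' h
          (fun r => tl (rev f0) (f0.ρ - s) r + ((j:ℝ) + 1) * r) := by
        rintro ⟨j, hj⟩
        rw [hT] at hj
        exact hc ⟨j + 1, germ_congr (fun _ => rfl) (fun r => by push_cast; ring) hj⟩
      rw [psi_bot_neg hrρ huρ hu0 hcond]
  by_cases hs0' : s = 0
  · -- backward shift, inverted by forward shift
    have hslt : s < f0.ρ := hsρ.lt_of_ne hst
    have huρ : f0.ρ - s = (rev f0).ρ := by rw [hs0', rev_rho]; ring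
    by_cases hc : ∃ i : ℕ, Germ' h (fun r => tl f0 s r + ((i:ℝ) + 1) * r)
    · rw [psi_bot_pos hρ hst hs0' hc]
      obtain ⟨i, hi⟩ := hc
      have hcond : ∃ j : ℕ, Germ' (fun r => h r - r)
          (fun r => dlt (rev f0) (f0.ρ - s) r + (j:ℝ) * r) := by
        refine ⟨i, ?_⟩
        rw [hD]
        exact germ_congr (fun r => by ring) (fun r => by ring) (germ_add (fun r => -r) hi)
      rw [psi_top_pos hrρ huρ hcond]
      funext r; ring
    · rw [psi_bot_neg hρ hst hs0' hc]
      have hcond : ¬ ∃ j : ℕ, Germ' h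
          (fun r => dlt (rev f0) (f0.ρ - s) r + (j:ℝ) * r) := by
        rintro ⟨j, hj⟩
        rw [hD] at hj
        rcases Nat.eq_zero_or_pos j with h0 | hpos
        · subst h0
          exact Hdom hslt (germ_congr (fun _ => rfl) (fun r => by push_cast; ring) hj)
        · obtain ⟨k, rfl⟩ : ∃ k, j = k + 1 :=
            ⟨j - 1, (Nat.succ_pred_eq_of_pos hpos).symm⟩
          exact hc ⟨k, germ_congr (fun _ => rfl) (fun r => by push_cast; ring) hj⟩
      rw [psi_top_neg hrρ huρ hcond]
  · -- transposition, self-inverse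
    have hslt : s < f0.ρ := hsρ.lt_of_ne hst
    have hs0'' : 0 < s := hs0.lt_of_ne (Ne.symm hs0')
    have huρ : f0.ρ - s ≠ (rev f0).ρ := by
      rw [rev_rho]; intro hh; exact hs0' (by linarith)
    have hu0 : f0.ρ - s ≠ 0 := by intro hh; exact hst (by linarith)
    by_cases hc : Germ' h (dlt f0 s)
    · rw [psi_mid_pos hρ hst hs0' hc]
      have hcond : Germ' (fun r => h r - dlt f0 s r + tl f0 s r)
          (dlt (rev f0) (f0.ρ - s)) := by
        rw [hD]
        exact germ_congr (fun r => by ring) (fun r => by ring)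
          (germ_add (fun r => tl f0 s r - dlt f0 s r) hc)
      rw [psi_mid_pos hrρ huρ hu0 hcond, hD, hT]
      funext r; ring
    · rw [psi_mid_neg hρ hst hs0' hc]
      have hcond : ¬ Germ' h (dlt (rev f0) (f0.ρ - s)) := by
        rw [hD]
        exact Hdom hslt
      rw [psi_mid_neg hrρ huρ hu0 hcond]

-- ===================== build =====================

noncomputable def pieceFun (f0 : Sp) (s ρ' : ℝ) (k : ℝ → ℝ) : ℝ → ℝ := fun t =>
  if max 0 (min t ρ') ≤ f0.ρ - s then
    f0.toFun (f0.ρ - max 0 (min t ρ')) - f0.toFun f0.ρ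
  else f0.toFun s - f0.toFun f0.ρ + k (max 0 (min t ρ') - (f0.ρ - s))

theorem pieceFun_eval {f0 : Sp} {s ρ' : ℝ} {k : ℝ → ℝ} {t : ℝ} (ht : t ∈ Icc 0 ρ') :
    pieceFun f0 s ρ' k t =
      if t ≤ f0.ρ - s then f0.toFun (f0.ρ - t) - f0.toFun f0.ρ
      else f0.toFun s - f0.toFun f0.ρ + k (t - (f0.ρ - s)) := by
  unfold pieceFun
  rw [clamp_of_mem ht]

theorem pieceFun_cont {f0 : Sp} {s ρ' : ℝ} {k : ℝ → ℝ} (hs0 : 0 ≤ s) (hsρ : s ≤ f0.ρ)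
    (hk : Continuous k) (hk0 : k 0 = 0) : Continuous (pieceFun f0 s ρ' k) := by
  have hg : Continuous (fun τ : ℝ =>
      if τ ≤ f0.ρ - s then f0.toFun (f0.ρ - τ) - f0.toFun f0.ρ
      else f0.toFun s - f0.toFun f0.ρ + k (τ - (f0.ρ - s))) := by
    apply Continuous.if_le
    · exact (f0.cont.comp (continuous_const.sub continuous_id)).sub continuous_const
    · exact continuous_const.add (hk.comp (continuous_id.sub continuous_const))
    · exact continuous_id
    · exact continuous_const
    · intro x hx
      rw [hx]
      have : f0.ρ - (f0.ρ - s) = s := by ring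
      rw [this]
      simp [hk0]
  exact hg.comp clamp_cont

noncomputable def build (f0 f : Sp) : Sp where
  ρ := f0.ρ + f.ρ - 2 * seg f f0
  toFun := pieceFun f0 (seg f f0) (f0.ρ + f.ρ - 2 * seg f f0)
    (psi f0 (seg f f0) (tl f (seg f f0)))
  ρ_nonneg := by
    have h1 := seg_le_left f f0
    have h2 := seg_le_right f f0
    linarith
  contOn := by
    apply Continuous.continuousOn
    exact pieceFun_cont (seg_nonneg f f0) (seg_le_right f f0)
      (psi_cont f0 _ (tl_cont f _)) (psi_zero f0 _ (tl_zero f _))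
  zero_at_zero := by
    have hρ' : (0:ℝ) ≤ f0.ρ + f.ρ - 2 * seg f f0 := by
      have h1 := seg_le_left f f0
      have h2 := seg_le_right f f0
      linarith
    have h0 : (0:ℝ) ∈ Icc (0:ℝ) (f0.ρ + f.ρ - 2 * seg f f0) := ⟨le_refl _, hρ'⟩
    rw [pieceFun_eval h0, if_pos (by linarith [seg_le_right f f0])]
    simp
  eq_clamp := by
    intro t
    have hρ' : (0:ℝ) ≤ f0.ρ + f.ρ - 2 * seg f f0 := by
      have h1 := seg_le_left f f0
      have h2 := seg_le_right f f0
      linarith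
    unfold pieceFun
    rw [clamp_idem hρ' t]

theorem build_rho (f0 f : Sp) : (build f0 f).ρ = f0.ρ + f.ρ - 2 * seg f f0 := rfl

theorem build_eval {f0 f : Sp} {t : ℝ} (ht : t ∈ Icc 0 (f0.ρ + f.ρ - 2 * seg f f0)) :
    (build f0 f).toFun t =
      if t ≤ f0.ρ - seg f f0 then f0.toFun (f0.ρ - t) - f0.toFun f0.ρ
      else f0.toFun (seg f f0) - f0.toFun f0.ρ +
        psi f0 (seg f f0) (tl f (seg f f0)) (t - (f0.ρ - seg f f0)) := by
  exact pieceFun_eval ht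

-- build of the base point is the zero function

theorem build_self (f0 : Sp) : build f0 f0 = zeroS := by
  have hseg : seg f0 f0 = f0.ρ := seg_self f0
  refine Sp.ext' ?_ ?_
  · rw [build_rho, hseg]
    have hz : zeroS.ρ = 0 := rfl
    rw [hz]; ring
  · funext t
    show pieceFun f0 (seg f0 f0) (f0.ρ + f0.ρ - 2 * seg f0 f0) _ t = zeroS.toFun t
    have hz : zeroS.toFun t = 0 := rfl
    rw [hz, hseg]
    have he : f0.ρ + f0.ρ - 2 * f0.ρ = 0 := by ring
    rw [he]
    unfold pieceFun
    have hcl : max 0 (min t (0:ℝ)) = 0 := max_eq_left (min_le_right t 0)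
    rw [hcl, if_pos (by linarith)]
    simp

-- build of zeroS is rev

theorem build_zeroS (f0 : Sp) : build f0 zeroS = rev f0 := by
  have hseg : seg zeroS f0 = 0 := seg_zeroS_left f0
  refine Sp.ext' ?_ ?_
  · rw [build_rho, rev_rho, hseg]
    show f0.ρ + zeroS.ρ - 2 * 0 = f0.ρ
    show f0.ρ + 0 - 2 * 0 = f0.ρ
    ring
  · funext t
    show pieceFun f0 (seg zeroS f0) (f0.ρ + zeroS.ρ - 2 * seg zeroS f0) _ t = _
    rw [hseg]
    have hz : zeroS.ρ = 0 := rfl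
    rw [hz]
    have he : f0.ρ + 0 - 2 * 0 = f0.ρ := by ring
    rw [he]
    unfold pieceFun
    rw [if_pos]
    · rw [rev_apply]
    · have := clamp_mem f0.ρ_nonneg t
      simp only [sub_zero]
      exact (clamp_mem f0.ρ_nonneg t).2

-- ===================== the key segregation computation =====================

theorem seg_build_le (f0 a b : Sp) (hab : seg a f0 ≤ seg b f0) :
    seg (build f0 a) (build f0 b) = f0.ρ - seg a f0 - seg b f0 + seg a b := by
  set sa := seg a f0 with hsa
  set sb := seg b f0 with hsb
  set sab := seg a b with hsab
  set u := f0.ρ - sa - sb + sab with hu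
  have hsa0 : 0 ≤ sa := seg_nonneg a f0
  have hsaρ : sa ≤ f0.ρ := seg_le_right a f0
  have hsaa : sa ≤ a.ρ := seg_le_left a f0
  have hsb0 : 0 ≤ sb := seg_nonneg b f0
  have hsbρ : sb ≤ f0.ρ := seg_le_right b f0
  have hsbb : sb ≤ b.ρ := seg_le_left b f0
  have hsab0 : 0 ≤ sab := seg_nonneg a b
  have hsaba : sab ≤ a.ρ := seg_le_left a b
  have hsabb : sab ≤ b.ρ := seg_le_right a b
  have hsa_le_sab : sa ≤ sab := by
    have := seg_min_le a b f0
    rwa [min_eq_left hab] at this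
  have hua : u ≤ f0.ρ + a.ρ - 2 * sa := by
    rw [hu]; linarith
  have hub : u ≤ f0.ρ + b.ρ - 2 * sb := by
    rcases eq_or_lt_of_le hab with heq | hlt
    · rw [hu, ← heq]; linarith
    · have h1 : sab = sa := seg_eq_of_lt hlt
      rw [hu, h1]; linarith
  -- agreement below u
  have hagree : ∀ t, 0 ≤ t → t < u →
      (build f0 a).toFun t = (build f0 b).toFun t := by
    intro t ht0 htu
    rw [build_eval ⟨ht0, htu.le.trans hua⟩, build_eval ⟨ht0, htu.le.trans hub⟩]
    simp only [← hsa, ← hsb]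
    by_cases hc : t ≤ f0.ρ - sb
    · rw [if_pos (hc.trans (by linarith)), if_pos hc]
    · push_neg at hc
      have hsasb : sa = sb := by
        by_contra hne
        have hlt : sa < sb := hab.lt_of_ne hne
        have h1 : sab = sa := seg_eq_of_lt hlt
        rw [hu, h1] at htu
        linarith
      have hσsab : sb < sab := by
        rw [hu, hsasb] at htu
        linarith
      have hgerm : Germ' (tl a sb) (tl b sb) := by
        refine ⟨sab - sb, by linarith, fun r' hr' => ?_⟩
        have h1 : a.toFun (sb + r') = b.toFun (sb + r') :=
          seg_eq_on' a b (by linarith [hr'.1]) (by linarith [hr'.2])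
        have h2 : a.toFun sb = b.toFun sb :=
          seg_eq_on' a b hsb0 (by linarith)
        simp only [tl, h1, h2]
      rw [if_neg (by rw [hsasb]; push_neg; exact hc), if_neg (not_le.2 hc)]
      rw [hsasb]
      have hd := psi_sub (f0 := f0) (s := sb) hgerm (t - (f0.ρ - sb))
      have htl : tl a sb (t - (f0.ρ - sb)) = tl b sb (t - (f0.ρ - sb)) := by
        have harg : sb + (t - (f0.ρ - sb)) ≤ sab := by
          rw [hu, hsasb] at htu
          linarith
        have harg0 : 0 ≤ sb + (t - (f0.ρ - sb)) := by linarith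
        have h1 : a.toFun (sb + (t - (f0.ρ - sb))) = b.toFun (sb + (t - (f0.ρ - sb))) :=
          seg_eq_on' a b harg0 harg
        have h2 : a.toFun sb = b.toFun sb := seg_eq_on' a b hsb0 (by linarith)
        simp only [tl, h1, h2]
      rw [htl] at hd
      linarith
  -- upper bound
  have hupper : ∀ x ∈ segSet (build f0 a) (build f0 b), x ≤ u := by
    intro x hx
    by_contra hxu
    push_neg at hxu
    have hxa : x ≤ f0.ρ + a.ρ - 2 * sa := by
      have h := hx.1.trans (min_le_left _ _)
      rwa [build_rho] at h
    have hxb : x ≤ f0.ρ + b.ρ - 2 * sb := by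
      have h := hx.1.trans (min_le_right _ _)
      rwa [build_rho] at h
    rcases eq_or_lt_of_le hab with heq | hlt
    · -- sa = sb
      have hsabρa : sab < a.ρ := by rw [hu] at hxu; linarith [heq]
      have hsabρb : sab < b.ρ := by rw [hu, heq] at hxu; linarith
      rcases eq_or_lt_of_le hsa_le_sab with hE | hG
      · -- sab = sa = sb : germ comparison
        have hgerm : ¬ Germ' (tl a sab) (tl b sab) := tl_not_germ hsabρa hsabρb
        have H1 : sa < f0.ρ → ¬ Germ' (tl a sa) (tl f0 sa) :=
          fun hh => tl_not_germ (by rw [← hsa] at *; linarith [hE ▸ hsabρa]) hh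
        have H2 : sb < f0.ρ → ¬ Germ' (tl b sb) (tl f0 sb) :=
          fun hh => tl_not_germ (by linarith [heq ▸ hE ▸ hsabρb]) hh
        have hinj : ¬ Germ' (psi f0 sa (tl a sa)) (psi f0 sb (tl b sb)) := by
          intro hgg
          rw [← heq] at hgg
          have hres := psi_germ_inj hsa0 hsaρ H1 (by rw [heq]; exact H2) hgg
          rw [hE] at hres
          exact hgerm hres
        have hu0 : 0 ≤ u := by rw [hu, ← heq, ← hE]; linarith
        unfold Germ' at hinj
        push_neg at hinj
        obtain ⟨r, hr, hne⟩ := hinj ((x - u) / 2) (by linarith)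
        have hr0 : 0 < r := by
          rcases eq_or_lt_of_le hr.1 with h0 | h0
          · exfalso
            apply hne
            rw [← h0, psi_zero f0 sa (tl_zero a sa), psi_zero f0 sb (tl_zero b sb)]
          · exact h0
        have ht' := hx.2 (u + r) ⟨by linarith, by linarith [hr.2]⟩
        rw [build_eval ⟨by linarith, by linarith [hr.2]⟩,
            build_eval ⟨by linarith, by linarith [hr.2]⟩] at ht'
        simp only [← hsa, ← hsb] at ht'
        have hineq : ¬ (u + r ≤ f0.ρ - sa) := by
          push_neg
          rw [hu, ← heq, ← hE]
          linarith
        have hineqb : ¬ (u + r ≤ f0.ρ - sb) := by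
          push_neg
          rw [hu, ← heq, ← hE]
          linarith
        rw [if_neg hineq, if_neg hineqb] at ht'
        apply hne
        have e1 : u + r - (f0.ρ - sa) = r := by rw [hu, ← heq, ← hE]; ring
        have e2 : u + r - (f0.ρ - sb) = r := by rw [hu, ← heq, ← hE]; ring
        rw [e1, e2] at ht'
        have e3 : f0.toFun sa = f0.toFun sb := by rw [heq]
        linarith
      · -- sa = sb < sab : transported disagreement
        have hm2 : sab < min (x - (f0.ρ - 2 * sa)) (min a.ρ b.ρ) := by
          refine lt_min ?_ (lt_min hsabρa hsabρb)
          rw [hu, ← heq] at hxu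
          linarith
        obtain ⟨r, hr1, hr2, hr3⟩ := exists_ne_of_seg_lt a b hm2 (min_le_right _ _)
        have hrx : r + (f0.ρ - 2 * sa) < x := by
          have := hr2.trans_le (min_le_left _ _)
          linarith
        have hu0 : 0 ≤ u := by rw [hu, ← heq]; linarith
        have ht' := hx.2 (r + (f0.ρ - 2 * sa))
          ⟨by rw [hu, ← heq] at *; linarith, hrx⟩
        rw [build_eval ⟨by rw [hu, ← heq] at *; linarith, by linarith⟩,
            build_eval ⟨by rw [hu, ← heq] at *; linarith, by linarith⟩] at ht'
        simp only [← hsa, ← hsb] at ht'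
        have hineq : ¬ (r + (f0.ρ - 2 * sa) ≤ f0.ρ - sa) := by
          push_neg; linarith
        have hineqb : ¬ (r + (f0.ρ - 2 * sa) ≤ f0.ρ - sb) := by
          push_neg; rw [← heq]; linarith
        rw [if_neg hineq, if_neg hineqb] at ht'
        have hgerm : Germ' (tl a sa) (tl b sa) := by
          refine ⟨sab - sa, by linarith, fun r' hr' => ?_⟩
          have h1 : a.toFun (sa + r') = b.toFun (sa + r') :=
            seg_eq_on' a b (by linarith [hr'.1]) (by linarith [hr'.2])
          have h2 : a.toFun sa = b.toFun sa := seg_eq_on' a b hsa0 (by linarith)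
          simp only [tl, h1, h2]
        have e1 : r + (f0.ρ - 2 * sa) - (f0.ρ - sa) = r - sa := by ring
        have e2 : r + (f0.ρ - 2 * sa) - (f0.ρ - sb) = r - sa := by rw [← heq]; ring
        rw [e1, e2, ← heq] at ht'
        have hd := psi_sub (f0 := f0) (s := sa) hgerm (r - sa)
        have htl : tl a sa (r - sa) = tl b sa (r - sa) := by linarith
        apply hr3
        have h2 : a.toFun sa = b.toFun sa := seg_eq_on' a b hsa0 (by linarith)
        have h3 : sa + (r - sa) = r := by ring
        simp only [tl, h3] at htl
        linarith
    · -- sa < sb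
      have hsabeq : sab = sa := seg_eq_of_lt hlt
      have hu2 : u = f0.ρ - sb := by rw [hu, hsabeq]; ring
      have hsbρb : sb < b.ρ := by rw [hu2] at hxu; linarith
      have hsb0' : 0 < sb := lt_of_le_of_lt hsa0 hlt
      have Hdomb : sb < f0.ρ → ¬ Germ' (tl b sb) (tl f0 sb) :=
        fun hh => tl_not_germ hsbρb hh
      have havoid : ¬ Germ' (psi f0 sb (tl b sb)) (dlt f0 sb) :=
        psi_avoid hsb0' hsbρ Hdomb
      unfold Germ' at havoid
      push_neg at havoid
      obtain ⟨r, hr, hne⟩ := havoid (min (x - u) (sb - sa) / 2)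
        (by have : 0 < min (x - u) (sb - sa) := lt_min (by linarith) (by linarith); linarith)
      have hrb1 : r ≤ (x - u) / 2 := by
        have := hr.2
        have h2 : min (x - u) (sb - sa) ≤ x - u := min_le_left _ _
        linarith
      have hrb2 : r ≤ (sb - sa) / 2 := by
        have := hr.2
        have h2 : min (x - u) (sb - sa) ≤ sb - sa := min_le_right _ _
        linarith
      have hr0 : 0 < r := by
        rcases eq_or_lt_of_le hr.1 with h0 | h0
        · exfalso
          apply hne
          rw [← h0, psi_zero f0 sb (tl_zero b sb), dlt_zero]
        · exact h0
      have hu0 : 0 ≤ u := by rw [hu2]; linarith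
      have ht' := hx.2 (u + r) ⟨by linarith, by linarith⟩
      rw [build_eval ⟨by linarith, by linarith⟩,
          build_eval ⟨by linarith, by linarith⟩] at ht'
      simp only [← hsa, ← hsb] at ht'
      have hineq : u + r ≤ f0.ρ - sa := by rw [hu2]; linarith
      have hineqb : ¬ (u + r ≤ f0.ρ - sb) := by rw [hu2]; push_neg; linarith
      rw [if_pos hineq, if_neg hineqb] at ht'
      apply hne
      have e1 : f0.ρ - (u + r) = sb - r := by rw [hu2]; ring
      have e2 : u + r - (f0.ρ - sb) = r := by rw [hu2]; ring
      rw [e1, e2] at ht'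
      simp only [dlt]
      linarith
  apply le_antisymm
  · exact seg_ub hupper
  · apply le_seg
    constructor
    · rw [build_rho, build_rho]
      exact le_min hua hub
    · intro t' ht'
      exact hagree t' ht'.1 ht'.2

theorem seg_build (f0 a b : Sp) :
    seg (build f0 a) (build f0 b) = f0.ρ - seg a f0 - seg b f0 + seg a b := by
  rcases le_total (seg a f0) (seg b f0) with h | h
  · exact seg_build_le f0 a b h
  · have hsym := seg_build_le f0 b a h
    rw [seg_comm (build f0 a), seg_comm a b, hsym]
    ring

theorem dS_build (f0 a b : Sp) : dS (build f0 a) (build f0 b) = dS a b := by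
  unfold dS
  rw [seg_build, build_rho, build_rho]
  ring

theorem build_inv (f0 f : Sp) : build (rev f0) (build f0 f) = f := by
  set s := seg f f0 with hs
  have hs0 : 0 ≤ s := seg_nonneg f f0
  have hsρ : s ≤ f0.ρ := seg_le_right f f0
  have hsf : s ≤ f.ρ := seg_le_left f f0
  have hsegg : seg (build f0 f) (rev f0) = f0.ρ - s := by
    rw [← build_zeroS f0, seg_build, seg_zeroS_left, seg_zeroS_right]
    rw [← hs]; ring
  have hρeq : (build (rev f0) (build f0 f)).ρ = f.ρ := by
    rw [build_rho, rev_rho, hsegg, build_rho, ← hs]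
    ring
  have main : ∀ τ ∈ Icc (0:ℝ) f.ρ, (build (rev f0) (build f0 f)).toFun τ = f.toFun τ := by
    intro τ hτ
    have hmem : τ ∈ Icc 0 ((rev f0).ρ + (build f0 f).ρ - 2 * seg (build f0 f) (rev f0)) := by
      rw [rev_rho, build_rho, hsegg, ← hs]
      constructor
      · exact hτ.1
      · have := hτ.2; linarith
    rw [build_eval hmem, rev_rho, hsegg]
    have e0 : f0.ρ - (f0.ρ - s) = s := by ring
    rw [e0]
    have hrevρ : (rev f0).toFun f0.ρ = - f0.toFun f0.ρ := by
      rw [rev_apply_mem f0 ⟨f0.ρ_nonneg, le_refl _⟩, sub_self, f0.zero_at_zero]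
      ring
    by_cases hτs : τ ≤ s
    · rw [if_pos hτs]
      rw [rev_apply_mem f0 ⟨by linarith [hτ.1], by linarith [hτ.1]⟩, hrevρ]
      have e1 : f0.ρ - (f0.ρ - τ) = τ := by ring
      rw [e1]
      have hval : f.toFun τ = f0.toFun τ := seg_eq_on' f f0 hτ.1 (by rw [← hs]; exact hτs)
      rw [hval]; ring
    · push_neg at hτs
      rw [if_neg (not_le.2 hτs)]
      have hsf' : s < f.ρ := lt_of_lt_of_le hτs hτ.2
      have hA : (rev f0).toFun (f0.ρ - s) = f0.toFun s - f0.toFun f0.ρ := by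
        rw [rev_apply_mem f0 ⟨by linarith, by linarith⟩, e0]
      -- the tail of `build f0 f` at `f0.ρ - s` agrees with `psi f0 s (tl f s)`
      have hgu : (build f0 f).toFun (f0.ρ - s) = f0.toFun s - f0.toFun f0.ρ := by
        have hm : f0.ρ - s ∈ Icc 0 (f0.ρ + f.ρ - 2 * seg f f0) := by
          rw [← hs]; constructor <;> linarith
        rw [build_eval hm, ← hs, if_pos (by linarith), e0]
      have hk : ∀ r', 0 ≤ r' → r' ≤ f.ρ - s →
          tl (build f0 f) (f0.ρ - s) r' = psi f0 s (tl f s) r' := by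
        intro r' hr'0 hr'1
        rcases eq_or_lt_of_le hr'0 with h0 | h0
        · rw [← h0, tl_zero, psi_zero f0 s (tl_zero f s)]
        · have hm : f0.ρ - s + r' ∈ Icc 0 (f0.ρ + f.ρ - 2 * seg f f0) := by
            rw [← hs]; constructor <;> linarith
          have hrfl : tl (build f0 f) (f0.ρ - s) r' =
              (build f0 f).toFun (f0.ρ - s + r') - (build f0 f).toFun (f0.ρ - s) := rfl
          rw [hrfl, build_eval hm, ← hs, if_neg (by push_neg; linarith), hgu]
          have e2 : f0.ρ - s + r' - (f0.ρ - s) = r' := by ring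
          rw [e2]
          ring
      have hger : Germ' (tl (build f0 f) (f0.ρ - s)) (psi f0 s (tl f s)) :=
        ⟨f.ρ - s, by linarith, fun r' hr' => hk r' hr'.1 hr'.2⟩
      have Hdom : s < f0.ρ → ¬ Germ' (tl f s) (tl f0 s) := by
        intro hh
        rw [hs]
        exact tl_not_germ (by rw [← hs]; exact hsf') (by rw [← hs]; exact hh)
      have hpsival : psi (rev f0) (f0.ρ - s) (tl (build f0 f) (f0.ρ - s)) (τ - s)
          = tl f s (τ - s) := by
        have hdiff := psi_sub (f0 := rev f0) (s := f0.ρ - s) hger (τ - s)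
        have hzero : tl (build f0 f) (f0.ρ - s) (τ - s) = psi f0 s (tl f s) (τ - s) :=
          hk (τ - s) (by linarith) (by linarith [hτ.2])
        rw [psi_rev_inv hs0 hsρ Hdom] at hdiff
        linarith
      rw [hpsival, hA, hrevρ]
      have hvs : f.toFun s = f0.toFun s := by
        have := seg_val f f0
        rw [← hs] at this
        exact this
      have e3 : s + (τ - s) = τ := by ring
      have e4 : tl f s (τ - s) = f.toFun τ - f.toFun s := by
        unfold tl
        rw [e3]
      rw [e4, hvs]
      ring
  refine Sp.ext' hρeq ?_
  funext t
  have h1 := (build (rev f0) (build f0 f)).eq_clamp t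
  rw [hρeq] at h1
  rw [h1, f.eq_clamp t]
  exact main _ (clamp_mem f.ρ_nonneg t)

theorem build_bijective (f0 : Sp) : Function.Bijective (build f0) := by
  constructor
  · exact Function.LeftInverse.injective (g := build (rev f0)) (fun f => build_inv f0 f)
  · intro g
    refine ⟨build (rev f0) g, ?_⟩
    have h := build_inv (rev f0) g
    rwa [rev_rev] at h


/-- `S` is homogeneous: every point can be moved to the zero
function by a bijective self-isometry; consequently, any point can be moved
to any other point by a self-isometry. -/
theorem Sp_homogeneous :
    (∀ f0 : Sp, ∃ F : Sp → Sp, Function.Bijective F ∧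
      (∀ a b : Sp, dS (F a) (F b) = dS a b) ∧ F f0 = zeroS) ∧
    (∀ a b : Sp, ∃ F : Sp → Sp, Function.Bijective F ∧
      (∀ x y : Sp, dS (F x) (F y) = dS x y) ∧ F a = b) := by
  constructor
  · intro f0
    exact ⟨build f0, build_bijective f0, fun a b => dS_build f0 a b, build_self f0⟩
  · intro a b
    refine ⟨fun x => build (rev b) (build a x), ?_, ?_, ?_⟩
    · exact (build_bijective (rev b)).comp (build_bijective a)
    · intro x y
      rw [dS_build, dS_build]
    · show build (rev b) (build a a) = b
      rw [build_self, build_zeroS, rev_rev]
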